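/- Let p be a prime with 2^(n-1) ≤ p < 2^n, and let x be an integer with 1 ≤ x < p. Run the Extended Euclidean Algorithm on (p, x) with termination index k and set b_i = ⌊log₂ q_i⌋. Fix 1 ≤ j ≤ k−1 and 0 < u ≤ 4(b_j + 1), let T = 4·Σ_{i=1}^{j-1}(b_i + 1) + u and ℓ_t = ⌊log₂ t_j⌋ + 1. Then ℓ_t + 1 ≤ ⌈T/4⌉ + 1 and ℓ_t + 1 ≤ n + 1. -/

import Mathlib

/-- Remainder sequence of the Extended Euclidean Algorithm on `(p, x)`:
`r 0 = p`, `r 1 = x`, and `r (i+1) = r (i-1) - ⌊r (i-1) / r i⌋ * r i` for `i ≥ 1`. -/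
def eeaR (p x : ℕ) : ℕ → ℕ
  | 0 => p
  | 1 => x
  | (i + 2) => eeaR p x i - (eeaR p x i / eeaR p x (i + 1)) * eeaR p x (i + 1)

/-- Quotient sequence `q i = ⌊r (i-1) / r i⌋` of the Extended Euclidean Algorithm. -/
def eeaQ (p x i : ℕ) : ℕ := eeaR p x (i - 1) / eeaR p x i

/-- Cofactor sequence of the Extended Euclidean Algorithm:
`t 0 = 0`, `t 1 = 1`, and `t (i+1) = t (i-1) + q i * t i` for `i ≥ 1`. -/
def eeaT (p x : ℕ) : ℕ → ℕ
  | 0 => 0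
  | 1 => 1
  | (i + 2) => eeaT p x i + eeaQ p x (i + 1) * eeaT p x (i + 1)

/-!
The cofactors grow at most geometrically in the quotients: `t_{i+1} = t_{i-1} + q_i t_i ≤ (q_i + 1) t_i
≤ 2^(b_i + 1) t_i`, because `t` is nondecreasing while the remainders are positive. Hence
`t_j ≤ 2^S` with `S = Σ_{i<j} (b_i + 1) < T/4`. On the other hand the invariant
`r_{i-1} t_i + r_i t_{i-1} = p` gives `t_j ≤ p < 2^n`.
-/

section

variable {p x : ℕ}

lemma eeaR_add_two (i : ℕ) : eeaR p x (i + 2) = eeaR p x i % eeaR p x (i + 1) := by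
  have := Nat.mod_add_div' (eeaR p x i) (eeaR p x (i + 1))
  rw [eeaR]
  omega

lemma eeaR_succ_le (hxp : x ≤ p) {i : ℕ} (hi : eeaR p x i ≠ 0) :
    eeaR p x (i + 1) ≤ eeaR p x i := by
  rcases i with _ | i
  · exact hxp
  · rw [eeaR_add_two]
    exact (Nat.mod_lt _ (Nat.pos_of_ne_zero hi)).le

lemma one_le_eeaQ_succ (hxp : x ≤ p) {i : ℕ} (hi : eeaR p x i ≠ 0)
    (hi' : eeaR p x (i + 1) ≠ 0) : 1 ≤ eeaQ p x (i + 1) :=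
  (Nat.one_le_div_iff (Nat.pos_of_ne_zero hi')).mpr (eeaR_succ_le hxp hi)

lemma eeaT_add_two (i : ℕ) :
    eeaT p x (i + 2) = eeaT p x i + eeaQ p x (i + 1) * eeaT p x (i + 1) := rfl

lemma eeaT_le_eeaT_succ (hxp : x ≤ p) {i : ℕ} (hr : ∀ m ≤ i, eeaR p x m ≠ 0) :
    eeaT p x i ≤ eeaT p x (i + 1) := by
  rcases i with _ | i
  · simp [eeaT]
  · rw [eeaT_add_two]
    nlinarith [one_le_eeaQ_succ hxp (hr i (by omega)) (hr (i + 1) le_rfl)]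

lemma eeaT_add_two_le (hxp : x ≤ p) {i : ℕ} (hr : ∀ m ≤ i, eeaR p x m ≠ 0) :
    eeaT p x (i + 2) ≤ 2 ^ (Nat.log 2 (eeaQ p x (i + 1)) + 1) * eeaT p x (i + 1) :=
  calc eeaT p x (i + 2) ≤ (eeaQ p x (i + 1) + 1) * eeaT p x (i + 1) := by
        rw [eeaT_add_two]
        nlinarith [eeaT_le_eeaT_succ hxp hr]
    _ ≤ 2 ^ (Nat.log 2 (eeaQ p x (i + 1)) + 1) * eeaT p x (i + 1) :=
        Nat.mul_le_mul_right _ (Nat.lt_pow_succ_log_self one_lt_two _)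

lemma eeaT_succ_le_two_pow_sum (hxp : x ≤ p) {j : ℕ} (hr : ∀ m < j, eeaR p x m ≠ 0) :
    eeaT p x (j + 1) ≤ 2 ^ ∑ i ∈ Finset.Icc 1 j, (Nat.log 2 (eeaQ p x i) + 1) := by
  induction j with
  | zero => simp [eeaT]
  | succ j ih =>
    rw [Finset.sum_Icc_succ_top (by omega), pow_add, mul_comm]
    exact (eeaT_add_two_le hxp fun m hm => hr m (by omega)).trans
      (Nat.mul_le_mul_left _ (ih fun m hm => hr m (by omega)))

lemma eeaR_mul_eeaT_add (i : ℕ) :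
    eeaR p x i * eeaT p x (i + 1) + eeaR p x (i + 1) * eeaT p x i = p := by
  induction i with
  | zero => simp [eeaR, eeaT]
  | succ i ih =>
    have hdiv := Nat.mod_add_div (eeaR p x i) (eeaR p x (i + 1))
    rw [eeaT_add_two, eeaR_add_two, eeaQ, Nat.add_sub_cancel]
    rw [← hdiv] at ih
    linarith

lemma eeaT_succ_le {i : ℕ} (hi : eeaR p x i ≠ 0) : eeaT p x (i + 1) ≤ p :=
  calc eeaT p x (i + 1) ≤ eeaR p x i * eeaT p x (i + 1) :=
        Nat.le_mul_of_pos_left _ (Nat.pos_of_ne_zero hi)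
    _ ≤ _ := Nat.le_add_right _ _
    _ = p := eeaR_mul_eeaT_add i

end

theorem stmt_15_general (n p x : ℕ) (hpub : p < 2 ^ n) (hxp : x < p)
    (k : ℕ) (hkmin : ∀ m < k, eeaR p x m ≠ 0)
    (j u : ℕ) (hj1 : 1 ≤ j) (hjk : j ≤ k - 1)
    (hu1 : 0 < u)
    (T : ℕ) (hT : T = 4 * ∑ i ∈ Finset.Icc 1 (j - 1), (Nat.log 2 (eeaQ p x i) + 1) + u)
    (ℓt : ℕ) (hlt : ℓt = Nat.log 2 (eeaT p x j) + 1) :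
    ((ℓt : ℤ) + 1 ≤ ⌈(T : ℚ) / 4⌉ + 1) ∧ ℓt + 1 ≤ n + 1 := by
  obtain ⟨i, rfl⟩ : ∃ i, j = i + 1 := ⟨j - 1, by omega⟩
  set S := ∑ l ∈ Finset.Icc 1 i, (Nat.log 2 (eeaQ p x l) + 1)
  simp only [Nat.add_sub_cancel] at hT
  have hlog_le_S : Nat.log 2 (eeaT p x (i + 1)) ≤ S := by
    have := Nat.log_mono_right (b := 2)
      (eeaT_succ_le_two_pow_sum (j := i) hxp.le fun m hm => hkmin m (by omega))
    rwa [Nat.log_pow one_lt_two] at this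
  have hlog_lt_n : Nat.log 2 (eeaT p x (i + 1)) < n :=
    (Nat.log_mono_right (eeaT_succ_le (hkmin i (by omega)))).trans_lt
      (Nat.log_lt_of_lt_pow (by omega) hpub)
  have hS_lt_ceil : (S : ℤ) < ⌈(T : ℚ) / 4⌉ := by
    rw [Int.lt_ceil, lt_div_iff₀ four_pos]
    exact_mod_cast (by omega : S * 4 < T)
  omega

/-- With `b_j = ⌊log₂ q_j⌋`, step `T = 4·Σ_{i<j}(b_i+1) + u`
(`0 < u ≤ 4(b_j+1)`) and `ℓ_t = ⌊log₂ t_j⌋ + 1`: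
`ℓ_t + 1 ≤ ⌈T/4⌉ + 1` and `ℓ_t + 1 ≤ n + 1`. -/
theorem stmt_15 (n p x : ℕ) (hp : p.Prime)
    (hplb : 2 ^ (n - 1) ≤ p) (hpub : p < 2 ^ n)
    (hx : 1 ≤ x) (hxp : x < p)
    (k : ℕ) (hk : eeaR p x k = 0) (hkmin : ∀ m < k, eeaR p x m ≠ 0)
    (j u : ℕ) (hj1 : 1 ≤ j) (hjk : j ≤ k - 1)
    (hu1 : 0 < u) (hu2 : u ≤ 4 * (Nat.log 2 (eeaQ p x j) + 1))
    (T : ℕ) (hT : T = 4 * ∑ i ∈ Finset.Icc 1 (j - 1), (Nat.log 2 (eeaQ p x i) + 1) + u)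
    (ℓt : ℕ) (hlt : ℓt = Nat.log 2 (eeaT p x j) + 1) :
    ((ℓt : ℤ) + 1 ≤ ⌈(T : ℚ) / 4⌉ + 1) ∧ ℓt + 1 ≤ n + 1 :=
  stmt_15_general n p x hpub hxp k hkmin j u hj1 hjk hu1 T hT ℓt hlt
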